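/- arXiv:2006.15562 — 7 statements merged into one kernel-verified Lean document; each statement's English description precedes it below -/
import Mathlib

section
/- For any L > 0 and any x, y ∈ ℝ with |y - x| ≤ L, the sum over all integers m of e^{-|y - (x + mL)|} equals cosh(|y - x| - L/2) / sinh(L/2). -/
/-!
Write `t = y - x`. Replacing `m` by `-m` shows the sum only depends on `|t|`, so take
`0 ≤ t ≤ L`. Then `t - mL ≥ 0` exactly for `m ≤ 0`, and the sum splits into two geometric series
of ratio `e^{-L}`, with sum `(e^{-t} + e^{t-L}) / (1 - e^{-L})`; multiplying numerator and
denominator by `e^{L/2}` gives `cosh (t - L/2) / sinh (L/2)`.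
-/

open Real

lemma hasSum_exp_sub_nat_mul {L : ℝ} (hL : 0 < L) (a : ℝ) :
    HasSum (fun n : ℕ ↦ exp (a - n * L)) (exp a / (1 - exp (-L))) := by
  have hr : exp (-L) < 1 := exp_lt_one_iff.mpr (neg_lt_zero.mpr hL)
  rw [div_eq_mul_inv]
  refine ((hasSum_geometric_of_lt_one (exp_pos _).le hr).mul_left (exp a)).congr_fun fun n ↦ ?_
  rw [← exp_nat_mul, ← exp_add]
  ring_nf

lemma hasSum_exp_neg_abs_sub_int_mul {L t : ℝ} (hL : 0 < L) (ht₀ : 0 ≤ t) (htL : t ≤ L) :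
    HasSum (fun m : ℤ ↦ exp (-|t - m * L|)) ((exp (-t) + exp (t - L)) / (1 - exp (-L))) := by
  rw [← (Equiv.neg ℤ).hasSum_iff, add_div]
  refine .of_nat_of_neg_add_one ?_ ?_
  · convert hasSum_exp_sub_nat_mul hL (-t) using 2 with n
    have : 0 ≤ t + n * L := by positivity
    simp only [Function.comp_apply, Equiv.neg_apply, Int.cast_neg, Int.cast_natCast]
    rw [neg_mul, sub_neg_eq_add, abs_of_nonneg this]
    ring_nf
  · convert hasSum_exp_sub_nat_mul hL (t - L) using 2 with n
    have : t - (n + 1) * L ≤ 0 := by nlinarith [n.cast_nonneg (α := ℝ)]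
    simp only [Function.comp_apply, Equiv.neg_apply, neg_neg]
    push_cast
    rw [abs_of_nonpos this]
    ring_nf

lemma div_one_sub_exp_neg_eq_cosh_div_sinh (t L : ℝ) :
    (exp (-t) + exp (t - L)) / (1 - exp (-L)) = cosh (t - L / 2) / sinh (L / 2) := by
  rw [← mul_div_mul_right _ _ (exp_pos (L / 2)).ne', cosh_eq, sinh_eq,
    div_div_div_cancel_right₀ two_ne_zero]
  congr 1
  · rw [add_mul, ← exp_add, ← exp_add, add_comm]; ring_nf
  · rw [sub_mul, one_mul, ← exp_add]; ring_nf

lemma hasSum_exp_neg_abs_sub_int_mul_of_abs_le {L t : ℝ} (hL : 0 < L) (ht : |t| ≤ L) :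
    HasSum (fun m : ℤ ↦ exp (-|t - m * L|)) (cosh (|t| - L / 2) / sinh (L / 2)) := by
  rw [← div_one_sub_exp_neg_eq_cosh_div_sinh]
  rcases abs_cases t with ⟨habs, ht₀⟩ | ⟨habs, -⟩
  · rw [habs] at ht ⊢
    exact hasSum_exp_neg_abs_sub_int_mul hL ht₀ ht
  · rw [← (Equiv.neg ℤ).hasSum_iff]
    convert hasSum_exp_neg_abs_sub_int_mul hL (abs_nonneg t) ht using 2 with m
    simp only [Function.comp_apply, Equiv.neg_apply, Int.cast_neg, habs]
    rw [← abs_neg]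
    ring_nf

theorem periodized_exponential_kernel (L x y : ℝ) (hL : 0 < L) (h : |y - x| ≤ L) :
    ∑' m : ℤ, Real.exp (-|y - (x + (m : ℝ) * L)|) =
      Real.cosh (|y - x| - L / 2) / Real.sinh (L / 2) := by
  simp_rw [← sub_sub]
  exact (hasSum_exp_neg_abs_sub_int_mul_of_abs_le hL h).tsum_eq
end

section
/- Let a₀,…,a_{n-1} be nonnegative reals and let A_j = [[1 + a_j², a_j], [a_j, 1]]. Then the trace of the product Π = A_{n-1}·A_{n-2}···A_0 satisfies tr(Π) - 2 ≥ (∑_{j=0}^{n-1} a_j)². -/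
/-!
Write `S_n = a₀ + ⋯ + a_{n-1}` and `Π_n = A_{n-1} ⋯ A₀`. By induction on `n`, the diagonal entries
of `Π_n` are at least `1`, its off-diagonal entries are at least `S_n`, and `tr Π_n - 2 ≥ S_n²`.
Multiplying by `A_n` on the left raises the trace by `a_n² Π₀₀ + a_n (Π₀₁ + Π₁₀) ≥ a_n² + 2 a_n S_n`,
which is exactly what turns `S_n²` into `S_{n+1}²`.
-/

open Matrix

variable {R : Type*} [CommRing R] [LinearOrder R] [IsStrictOrderedRing R]

def transferMatrix (x : R) : Matrix (Fin 2) (Fin 2) R :=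
  !![1 + x ^ 2, x; x, 1]

def IsTransferBound (S : R) (P : Matrix (Fin 2) (Fin 2) R) : Prop :=
  1 ≤ P 0 0 ∧ S ≤ P 0 1 ∧ S ≤ P 1 0 ∧ 1 ≤ P 1 1 ∧ S ^ 2 ≤ P.trace - 2

theorem IsTransferBound.transferMatrix_mul {S x : R} {P : Matrix (Fin 2) (Fin 2) R}
    (h : IsTransferBound S P) (hS : 0 ≤ S) (hx : 0 ≤ x) :
    IsTransferBound (S + x) (transferMatrix x * P) := by
  obtain ⟨h00, h01, h10, h11, htr⟩ := h
  rw [trace_fin_two] at htr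
  simp only [IsTransferBound, transferMatrix, trace_fin_two, mul_apply, Fin.sum_univ_two,
    of_apply, cons_val', cons_val_zero, cons_val_one, empty_val', cons_val_fin_one]
  refine ⟨?_, ?_, ?_, ?_, ?_⟩ <;> nlinarith [sq_nonneg x, mul_nonneg hx hS]

theorem List.prod_map_reverse_range_succ {M : Type*} [Monoid M] (f : ℕ → M) (n : ℕ) :
    ((List.range (n + 1)).reverse.map f).prod = f n * ((List.range n).reverse.map f).prod := by
  simp [List.range_succ]

theorem isTransferBound_prod (a : ℕ → R) (ha : ∀ j, 0 ≤ a j) (n : ℕ) :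
    IsTransferBound (∑ j ∈ Finset.range n, a j)
      ((List.range n).reverse.map (fun j => transferMatrix (a j))).prod := by
  induction n with
  | zero => simp [IsTransferBound]
  | succ n ih =>
    rw [Finset.sum_range_succ, List.prod_map_reverse_range_succ]
    exact ih.transferMatrix_mul (Finset.sum_nonneg fun j _ => ha j) (ha n)

theorem trace_of_transfer_product_lower_bound_general (n : ℕ) (a : ℕ → ℝ)
    (ha : ∀ j, 0 ≤ a j) :
    Matrix.trace (((List.range n).reverse.map
        (fun j => (!![1 + (a j) ^ 2, a j; a j, 1] : Matrix (Fin 2) (Fin 2) ℝ))).prod) - 2 ≥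
      (∑ j ∈ Finset.range n, a j) ^ 2 :=
  (isTransferBound_prod a ha n).2.2.2.2

theorem trace_of_transfer_product_lower_bound (n : ℕ) (hn : 1 ≤ n) (a : ℕ → ℝ)
    (ha : ∀ j, 0 ≤ a j) :
    Matrix.trace (((List.range n).reverse.map
        (fun j => (!![1 + (a j) ^ 2, a j; a j, 1] : Matrix (Fin 2) (Fin 2) ℝ))).prod) - 2 ≥
      (∑ j ∈ Finset.range n, a j) ^ 2 :=
  trace_of_transfer_product_lower_bound_general n a ha
end

section
/- Let n ≥ 1 and let y : ℤ → ℝ satisfy y_{i+n} = y_i + L with L > 0 and y_{i+1} ≥ y_i for all i. Let Δξ = L/n and let A be the 2n×2n matrix with diagonal entries A_{2j,2j} = A_{2j+1,2j+1} = (y_{j+1} - y_j)/Δξ, superdiagonal entries -1/Δξ, subdiagonal entries 1/Δξ, corner entries A_{0,2n-1} = 1/Δξ and A_{2n-1,0} = -1/Δξ, and zeros elsewhere. Then A is invertible, and moreover det(A) ≥ n^{2n}/L^{2n-2}. -/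
/-!
Write `A = diagonal d + Δξ⁻¹ • C`, where `d i = D₊y_{⌊i/2⌋} ≥ 0` and `C` is the skew-symmetric
matrix of the oriented `2n`-cycle. Expanding the determinant row by row,
`det (diagonal d + B) = ∑ₛ (∏_{i ∈ s} d i) · det B[sᶜ]`, and every principal minor of a real
skew-symmetric matrix is nonnegative: `det (t + B) ≠ 0` for `t ≠ 0`, so the monic polynomial
`t ↦ det (t + B)` has no positive root. Keep only the terms `s = {2p, 2q + 1}`: deleting an even
and an odd vertex cuts the cycle into two paths with an even number of vertices, whose
determinants are `1`. These terms add up to `(∑ₚ d (2p)) (∑_q d (2q + 1)) Δξ^(2 - 2n)`, and by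
periodicity both sums telescope to `L / Δξ = n`.

For `n = 1` the two corner entries are shadowed by the super- and subdiagonal ones, `A` is
`[[d, -1/Δξ], [1/Δξ, d]]` rather than a cycle, and its determinant is computed directly.
-/

open Matrix Finset

theorem Fin.eq_add_one_iff_val {N : ℕ} [NeZero N] {i j : Fin N} :
    j = i + 1 ↔ (j : ℕ) = i + 1 ∨ ((i : ℕ) = N - 1 ∧ (j : ℕ) = 0) := by
  have hi := i.isLt
  have hj := j.isLt
  rw [Fin.ext_iff, Fin.val_add_eq_ite, Fin.coe_ofNat_eq_mod]
  obtain rfl | hN := (Nat.one_le_iff_ne_zero.mpr (NeZero.ne N)).eq_or_lt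
  · rw [Nat.mod_self]
    split_ifs <;> omega
  · rw [Nat.mod_eq_of_lt hN]
    split_ifs <;> omega

namespace Matrix

section Skew

variable {ι : Type*} [Fintype ι]

theorem dotProduct_mulVec_self_eq_zero_of_transpose_eq_neg {B : Matrix ι ι ℝ} (hB : Bᵀ = -B)
    (v : ι → ℝ) : v ⬝ᵥ B *ᵥ v = 0 := by
  have h : v ⬝ᵥ B *ᵥ v = -(v ⬝ᵥ B *ᵥ v) := by
    conv_lhs => rw [dotProduct_mulVec, ← mulVec_transpose, hB, neg_mulVec, neg_dotProduct,
      dotProduct_comm]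
  linarith

variable [DecidableEq ι]

theorem det_scalar_add_ne_zero_of_transpose_eq_neg {B : Matrix ι ι ℝ} (hB : Bᵀ = -B) {t : ℝ}
    (ht : t ≠ 0) : (scalar ι t + B).det ≠ 0 := by
  rw [Ne, ← exists_mulVec_eq_zero_iff]
  rintro ⟨v, hv, hBv⟩
  have h : t * (v ⬝ᵥ v) = 0 := by
    simpa [add_mulVec, dotProduct_add, dotProduct_mulVec_self_eq_zero_of_transpose_eq_neg hB,
      scalar_apply, dotProduct_smul] using congrArg (v ⬝ᵥ ·) hBv
  exact hv (dotProduct_self_eq_zero.mp ((mul_eq_zero.mp h).resolve_left ht))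

theorem det_nonneg_of_transpose_eq_neg {B : Matrix ι ι ℝ} (hB : Bᵀ = -B) : 0 ≤ B.det := by
  have hroots : ∀ t, (-B).charpoly.IsRoot t → t ≤ 0 := by
    intro t ht
    by_contra! hpos
    rw [Polynomial.IsRoot, eval_charpoly, sub_neg_eq_add] at ht
    exact det_scalar_add_ne_zero_of_transpose_eq_neg hB hpos.ne' ht
  simpa [eval_charpoly] using Polynomial.zero_le_eval_of_roots_le_of_leadingCoeff_nonneg hroots
    ((charpoly_monic (-B)).leadingCoeff ▸ zero_le_one)

end Skew

section PrincipalMinors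

variable {R ι κ : Type*} [CommRing R] [Fintype ι] [DecidableEq ι] [Fintype κ] [DecidableEq κ]

theorem det_updateRows_single_eq_det_submatrix_compl (B : Matrix ι ι R) (s : Finset ι) :
    (of fun i => if i ∈ s then Pi.single i 1 else B i).det =
      (B.submatrix (Subtype.val : {i // i ∉ s} → ι) Subtype.val).det := by
  rw [← det_submatrix_equiv_self (Equiv.sumCompl (· ∈ s))]
  have hblocks : (of fun i => if i ∈ s then Pi.single i 1 else B i).submatrix
      (Equiv.sumCompl (· ∈ s)) (Equiv.sumCompl (· ∈ s)) =
        fromBlocks 1 0 (B.submatrix (Subtype.val : {i // i ∉ s} → ι) Subtype.val)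
          (B.submatrix Subtype.val Subtype.val) := by
    ext (⟨i, hi⟩ | ⟨i, hi⟩) (⟨j, hj⟩ | ⟨j, hj⟩) <;>
      simp only [submatrix_apply, Equiv.sumCompl_apply_inl, Equiv.sumCompl_apply_inr, of_apply, hi,
        if_true, if_false, Pi.single_apply, one_apply, zero_apply, fromBlocks_apply₁₁,
        fromBlocks_apply₁₂, fromBlocks_apply₂₁, fromBlocks_apply₂₂, Subtype.mk.injEq, eq_comm]
    exact (if_neg (ne_of_mem_of_not_mem hi hj)).symm
  rw [hblocks, det_fromBlocks_zero₁₂, det_one, one_mul]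

theorem det_diagonal_add (d : ι → R) (B : Matrix ι ι R) :
    (diagonal d + B).det =
      ∑ s : Finset ι, (∏ i ∈ s, d i) *
        (B.submatrix (Subtype.val : {i // i ∉ s} → ι) Subtype.val).det := by
  have hrows : ∀ s : Finset ι, s.piecewise (diagonal d) B =
      fun i => (if i ∈ s then d i else 1) • (if i ∈ s then Pi.single i 1 else B i) := by
    intro s
    ext i j
    by_cases hi : i ∈ s <;> simp [Finset.piecewise, hi, diagonal_apply, Pi.single_apply, eq_comm]
  have hexp := (detRowAlternating : (ι → R) [⋀^ι]→ₗ[R] R).map_add_univ (diagonal d) B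
  refine hexp.trans (sum_congr rfl fun s _ => ?_)
  rw [hrows, AlternatingMap.map_smul_univ, prod_ite_mem, univ_inter, smul_eq_mul,
    ← det_updateRows_single_eq_det_submatrix_compl]
  rfl

theorem det_submatrix_compl_eq_det_submatrix (B : Matrix ι ι R) (s : Finset ι) {f : κ → ι}
    (hf : Function.Injective f) (hfs : ∀ z, f z ∉ s)
    (hcard : Fintype.card κ + s.card = Fintype.card ι) :
    (B.submatrix (Subtype.val : {i // i ∉ s} → ι) Subtype.val).det = (B.submatrix f f).det := by
  have hbij : Function.Bijective fun z => (⟨f z, hfs z⟩ : {i // i ∉ s}) := by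
    refine (Fintype.bijective_iff_injective_and_card _).mpr
      ⟨fun z w h => hf (congrArg Subtype.val h), ?_⟩
    rw [Fintype.card_subtype_compl, Fintype.card_coe]
    omega
  rw [← det_submatrix_equiv_self (Equiv.ofBijective _ hbij), submatrix_submatrix]
  rfl

end PrincipalMinors

theorem sum_le_det_diagonal_add_of_transpose_eq_neg {ι : Type*} [Fintype ι] [DecidableEq ι]
    {d : ι → ℝ} (hd : 0 ≤ d) {B : Matrix ι ι ℝ} (hB : Bᵀ = -B) (S : Finset (Finset ι)) :
    ∑ s ∈ S, (∏ i ∈ s, d i) * (B.submatrix (Subtype.val : {i // i ∉ s} → ι) Subtype.val).det ≤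
      (diagonal d + B).det := by
  rw [det_diagonal_add]
  refine sum_le_univ_sum_of_nonneg fun s =>
    mul_nonneg (prod_nonneg fun i _ => hd i) (det_nonneg_of_transpose_eq_neg ?_)
  rw [transpose_submatrix, hB]
  rfl

section Cycle

variable (R : Type*) [CommRing R]

def orientedPath (m : ℕ) : Matrix (Fin m) (Fin m) R :=
  of fun i j => if (j : ℕ) = i + 1 then -1 else if (i : ℕ) = j + 1 then 1 else 0

def orientedCycle (N : ℕ) [NeZero N] : Matrix (Fin N) (Fin N) R :=
  of fun i j => if j = i + 1 then -1 else if i = j + 1 then 1 else 0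

variable {R}

/-- The vertices `[1, g)` and `(g, N)` of the `N`-cycle, i.e. all vertices but `0` and `g`. -/
def cycleGaps {N : ℕ} (g : Fin N) : Fin ((g : ℕ) - 1) ⊕ Fin (N - 1 - g) → Fin N :=
  Sum.elim (fun k => ⟨k + 1, by omega⟩) (fun k => ⟨g + 1 + k, by omega⟩)

theorem det_orientedPath_add_two (m : ℕ) :
    (orientedPath R (m + 2)).det = (orientedPath R m).det := by
  -- Laplace expansion along row `0`, then along column `0`: each has a single nonzero entry.
  have hrow : (orientedPath R (m + 2)).det =
      ((orientedPath R (m + 2)).submatrix Fin.succ (Fin.succAbove 1)).det := by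
    rw [det_succ_row_zero, Fin.sum_univ_succ, Fin.sum_univ_succ]
    simp [orientedPath]
  have hsub : ((orientedPath R (m + 2)).submatrix Fin.succ (Fin.succAbove 1)).submatrix
      Fin.succ Fin.succ = orientedPath R m := by
    ext i j
    simp [orientedPath, Fin.succAbove, Fin.lt_def]
  rw [hrow, det_succ_column_zero, Fin.sum_univ_succ, Fin.succAbove_zero, hsub]
  simp [orientedPath, Fin.succAbove]

theorem det_orientedPath_of_even {m : ℕ} (hm : Even m) : (orientedPath R m).det = 1 := by
  obtain ⟨k, rfl⟩ := hm
  induction k with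
  | zero => exact det_fin_zero
  | succ k ih => rw [show k + 1 + (k + 1) = k + k + 2 by ring, det_orientedPath_add_two, ih]

theorem orientedCycle_add_add {N : ℕ} [NeZero N] (i j k : Fin N) :
    orientedCycle R N (i + k) (j + k) = orientedCycle R N i j := by
  simp only [orientedCycle, of_apply, add_right_comm _ k, add_left_inj]

theorem orientedCycle_transpose {N : ℕ} [NeZero N] (hN : 3 ≤ N) :
    (orientedCycle R N)ᵀ = -orientedCycle R N := by
  ext i j
  have hi := i.isLt
  have hj := j.isLt
  simp only [orientedCycle, transpose_apply, neg_apply, of_apply, Fin.eq_add_one_iff_val]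
  split_ifs <;> first | omega | simp

theorem cycleGaps_injective {N : ℕ} (g : Fin N) : Function.Injective (cycleGaps g) := by
  rintro (k | k) (l | l) h <;>
    simp only [cycleGaps, Sum.elim_inl, Sum.elim_inr, Fin.ext_iff, Sum.inl.injEq, Sum.inr.injEq,
      reduceCtorEq] at h ⊢ <;>
    omega

theorem cycleGaps_ne {N : ℕ} [NeZero N] (g : Fin N) (z : Fin ((g : ℕ) - 1) ⊕ Fin (N - 1 - g)) :
    cycleGaps g z ≠ 0 ∧ cycleGaps g z ≠ g := by
  rcases z with k | k <;>
    simp only [cycleGaps, Sum.elim_inl, Sum.elim_inr, ne_eq, Fin.ext_iff, Fin.val_zero] <;>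
    omega

theorem orientedCycle_submatrix_cycleGaps {N : ℕ} [NeZero N] (g : Fin N) :
    (orientedCycle R N).submatrix (cycleGaps g) (cycleGaps g) =
      fromBlocks (orientedPath R _) 0 0 (orientedPath R _) := by
  ext (k | k) (l | l) <;>
    simp only [cycleGaps, orientedCycle, orientedPath, Fin.eq_add_one_iff_val, submatrix_apply,
      of_apply, fromBlocks_apply₁₁, fromBlocks_apply₁₂, fromBlocks_apply₂₁, fromBlocks_apply₂₂,
      zero_apply, Sum.elim_inl, Sum.elim_inr] <;>
    grind

theorem det_orientedCycle_submatrix_compl_pair {N : ℕ} [NeZero N] (hN : Even N) {i j : Fin N}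
    (hij : Odd ((i : ℕ) + j)) :
    ((orientedCycle R N).submatrix (Subtype.val : {x // x ∉ ({i, j} : Finset (Fin N))} → Fin N)
      Subtype.val).det = 1 := by
  have hN2 := hN.two_dvd
  obtain ⟨g, hg, rfl⟩ : ∃ g : Fin N, (g : ℕ) % 2 = 1 ∧ j = g + i := by
    refine ⟨j - i, ?_, (sub_add_cancel j i).symm⟩
    rw [Fin.val_sub, Nat.mod_mod_of_dvd _ hN2]
    have := Nat.odd_iff.mp hij
    have := i.isLt
    omega
  have hgN := g.isLt
  have hshift : (orientedCycle R N).submatrix ((· + i) ∘ cycleGaps g) ((· + i) ∘ cycleGaps g) =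
      (orientedCycle R N).submatrix (cycleGaps g) (cycleGaps g) := by
    ext k l
    exact orientedCycle_add_add _ _ _
  have hne : i ≠ g + i := by
    rw [ne_comm, Ne, add_eq_right, Fin.ext_iff, Fin.val_zero]
    omega
  rw [det_submatrix_compl_eq_det_submatrix _ _ ((add_left_injective i).comp (cycleGaps_injective g))
      (fun z => by simpa [add_left_inj] using cycleGaps_ne g z),
    hshift, orientedCycle_submatrix_cycleGaps, det_fromBlocks_zero₂₁,
    det_orientedPath_of_even (Nat.even_iff.mpr (by omega)),
    det_orientedPath_of_even (Nat.even_iff.mpr (by omega)), one_mul]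
  rw [card_pair hne, Fintype.card_sum, Fintype.card_fin, Fintype.card_fin, Fintype.card_fin]
  omega

end Cycle

theorem sum_mul_sum_mul_pow_le_det_diagonal_add_smul_orientedCycle {n : ℕ} [NeZero n]
    (hn : 2 ≤ n) {d : Fin (2 * n) → ℝ} (hd : 0 ≤ d) (a : ℝ) :
    (∑ p : Fin n, d ⟨2 * p, by omega⟩) * (∑ q : Fin n, d ⟨2 * q + 1, by omega⟩) *
        a ^ (2 * n - 2) ≤ (diagonal d + a • orientedCycle ℝ (2 * n)).det := by
  set B := a • orientedCycle ℝ (2 * n)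
  have hskew : Bᵀ = -B := by
    rw [transpose_smul, orientedCycle_transpose (by omega), smul_neg]
  let pair : Fin n × Fin n → Finset (Fin (2 * n)) := fun pq =>
    {⟨2 * pq.1, by omega⟩, ⟨2 * pq.2 + 1, by omega⟩}
  have hpair_ne : ∀ pq : Fin n × Fin n,
      (⟨2 * pq.1, by omega⟩ : Fin (2 * n)) ≠ ⟨2 * pq.2 + 1, by omega⟩ := by
    intro pq h
    rw [Fin.mk.injEq] at h
    omega
  have hpair : Set.InjOn pair (univ : Finset (Fin n × Fin n)) := by
    rintro ⟨p, q⟩ - ⟨p', q'⟩ - h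
    have h1 := (Finset.ext_iff.mp h ⟨2 * p, by omega⟩).mp (mem_insert_self _ _)
    have h2 := (Finset.ext_iff.mp h ⟨2 * q + 1, by omega⟩).mp
      (mem_insert_of_mem (mem_singleton_self _))
    simp only [pair, mem_insert, mem_singleton, Fin.mk.injEq] at h1 h2
    simp only [Prod.mk.injEq, Fin.ext_iff]
    omega
  have hminor : ∀ pq, (B.submatrix (Subtype.val : {i // i ∉ pair pq} → Fin (2 * n))
      Subtype.val).det = a ^ (2 * n - 2) := by
    intro pq
    rw [submatrix_smul, Pi.smul_apply, Pi.smul_apply, det_smul,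
      det_orientedCycle_submatrix_compl_pair (even_two_mul n) ⟨pq.1 + pq.2, by ring⟩, mul_one,
      Fintype.card_subtype_compl, Fintype.card_coe, card_pair (hpair_ne pq), Fintype.card_fin]
  calc _ = ∑ pq : Fin n × Fin n, (∏ i ∈ pair pq, d i) *
        (B.submatrix (Subtype.val : {i // i ∉ pair pq} → Fin (2 * n)) Subtype.val).det := by
        rw [sum_mul_sum, ← Fintype.sum_prod_type', sum_mul]
        refine sum_congr rfl fun pq _ => ?_
        rw [hminor, prod_pair (hpair_ne pq)]
    _ = ∑ s ∈ univ.image pair, (∏ i ∈ s, d i) *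
        (B.submatrix (Subtype.val : {i // i ∉ s} → Fin (2 * n)) Subtype.val).det := by
      rw [sum_image hpair]
    _ ≤ _ := sum_le_det_diagonal_add_of_transpose_eq_neg hd hskew _

end Matrix

open Matrix

noncomputable def fwdDiffQuot (y : ℤ → ℝ) (Δξ : ℝ) (j : ℤ) : ℝ := (y (j + 1) - y j) / Δξ

noncomputable def momentumMatrix (n : ℕ) (y : ℤ → ℝ) (Δξ : ℝ) :
    Matrix (Fin (2 * n)) (Fin (2 * n)) ℝ := fun i j =>
  if (i : ℕ) = (j : ℕ) then fwdDiffQuot y Δξ ((i : ℕ) / 2 : ℕ)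
  else if (j : ℕ) = (i : ℕ) + 1 then -1 / Δξ
  else if (i : ℕ) = (j : ℕ) + 1 then 1 / Δξ
  else if (i : ℕ) = 0 ∧ (j : ℕ) = 2 * n - 1 then 1 / Δξ
  else if (i : ℕ) = 2 * n - 1 ∧ (j : ℕ) = 0 then -1 / Δξ
  else 0

theorem fwdDiffQuot_nonneg {y : ℤ → ℝ} {j : ℤ} (hy : y j ≤ y (j + 1)) {Δξ : ℝ}
    (hΔξ : 0 ≤ Δξ) : 0 ≤ fwdDiffQuot y Δξ j :=
  div_nonneg (sub_nonneg.mpr hy) hΔξ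

theorem sum_fwdDiffQuot_of_add_period {n : ℕ} {L : ℝ} {y : ℤ → ℝ}
    (hper : ∀ i : ℤ, y (i + n) = y i + L) (Δξ : ℝ) :
    ∑ p : Fin n, fwdDiffQuot y Δξ p = L / Δξ := by
  have htel := sum_range_sub (fun m : ℕ => y m) n
  push_cast at htel
  simp only [fwdDiffQuot, ← sum_div]
  rw [Fin.sum_univ_eq_sum_range (fun m : ℕ => y (m + 1) - y m), htel,
    ← zero_add (n : ℤ), hper, add_sub_cancel_left]

theorem momentumMatrix_eq_diagonal_add_smul_orientedCycle {n : ℕ} [NeZero n] (hn : 2 ≤ n)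
    (y : ℤ → ℝ) (Δξ : ℝ) :
    momentumMatrix n y Δξ = diagonal (fun i : Fin (2 * n) => fwdDiffQuot y Δξ ((i : ℕ) / 2 : ℕ)) +
      Δξ⁻¹ • orientedCycle ℝ (2 * n) := by
  ext i j
  have hi := i.isLt
  have hj := j.isLt
  simp only [momentumMatrix, Matrix.add_apply, diagonal_apply, Matrix.smul_apply, orientedCycle,
    of_apply, Fin.eq_add_one_iff_val, smul_eq_mul]
  simp only [Fin.ext_iff]
  split_ifs <;> first | omega | ring

theorem det_momentumMatrix_one (y : ℤ → ℝ) (Δξ : ℝ) :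
    (momentumMatrix 1 y Δξ).det = fwdDiffQuot y Δξ 0 ^ 2 + Δξ⁻¹ ^ 2 := by
  rw [det_fin_two]
  simp [momentumMatrix, sq, neg_div]

theorem discrete_momentum_matrix_invertible (n : ℕ) (hn : 1 ≤ n) (L : ℝ) (hL : 0 < L)
    (y : ℤ → ℝ) (hper : ∀ i : ℤ, y (i + n) = y i + L) (hmono : ∀ i : ℤ, y i ≤ y (i + 1)) :
    let Δξ : ℝ := L / n
    let A : Matrix (Fin (2 * n)) (Fin (2 * n)) ℝ := fun i j =>
      if (i : ℕ) = (j : ℕ) then (y (((i : ℕ) / 2 : ℕ) + 1) - y (((i : ℕ) / 2 : ℕ))) / Δξ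
      else if (j : ℕ) = (i : ℕ) + 1 then -1 / Δξ
      else if (i : ℕ) = (j : ℕ) + 1 then 1 / Δξ
      else if (i : ℕ) = 0 ∧ (j : ℕ) = 2 * n - 1 then 1 / Δξ
      else if (i : ℕ) = 2 * n - 1 ∧ (j : ℕ) = 0 then -1 / Δξ
      else 0
    IsUnit A ∧ A.det ≥ (n : ℝ) ^ (2 * n) / L ^ (2 * n - 2) := by
  intro Δξ A
  have hnpos : (0 : ℝ) < n := by exact_mod_cast hn
  have hΔξ : 0 < Δξ := div_pos hL hnpos
  have hsum : ∑ p : Fin n, fwdDiffQuot y Δξ p = n := by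
    rw [sum_fwdDiffQuot_of_add_period hper, div_div_cancel₀ hL.ne']
  suffices hdet : (n : ℝ) ^ (2 * n) / L ^ (2 * n - 2) ≤ (momentumMatrix n y Δξ).det from
    ⟨(isUnit_iff_isUnit_det A).mpr (lt_of_lt_of_le (by positivity) hdet).ne'.isUnit, hdet⟩
  obtain rfl | hn2 := hn.eq_or_lt
  · have hd : fwdDiffQuot y Δξ 0 = 1 := by simpa using hsum
    rw [det_momentumMatrix_one, hd]
    simpa using sq_nonneg Δξ⁻¹
  · have : NeZero n := ⟨by omega⟩
    rw [momentumMatrix_eq_diagonal_add_smul_orientedCycle hn2]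
    refine le_of_eq_of_le ?_ (sum_mul_sum_mul_pow_le_det_diagonal_add_smul_orientedCycle hn2
      (fun i => fwdDiffQuot_nonneg (hmono _) hΔξ.le) Δξ⁻¹)
    simp only [show ∀ p : ℕ, 2 * p / 2 = p by omega, show ∀ p : ℕ, (2 * p + 1) / 2 = p by omega,
      hsum]
    rw [show Δξ⁻¹ = n / L from inv_div L n, div_pow, ← mul_div_assoc, ← sq, ← pow_add,
      Nat.add_sub_cancel' (by omega)]
end

section
/- Let Δx > 0, κ > 0 with e^κ + e^{-κ} = 2 + Δx², and n ≥ 1. Define g_j = (1/√(4 + Δx²)) · (e^{-κ j} + e^{κ(j - n)})/(1 - e^{-κ n}) for j ∈ ℤ, extended n-periodically. Then g satisfies the difference equation g_j - (g_{j+1} - 2g_j + g_{j-1})/Δx² = δ_{0,j}/Δx for all j ∈ {0,…,n-1} (indices mod n), where δ is the Kronecker delta. -/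
/-!
The profile `G(t) = (e^{-κt} + e^{κ(t-n)}) / (1 - e^{-κn})` satisfies
`G(t+1) + G(t-1) = (e^κ + e^{-κ}) G(t)` for every real `t`, which by the characteristic relation is
the homogeneous equation `G - D₋D₊G = 0`. Reducing indices mod `n` only matters across the seam:
`G(n) = G(0)`, so the forward neighbour is unaffected, while `G(n-1) = G(-1) - (e^κ - e^{-κ})`, and
this defect, equal to `Δx √(4 + Δx²)`, produces the right-hand side `δ_{0,j} / Δx`.
-/

open Real

noncomputable def greenProfile (κ : ℝ) (n : ℕ) (t : ℝ) : ℝ :=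
  (exp (-κ * t) + exp (κ * (t - n))) / (1 - exp (-κ * n))

section greenProfile

variable {κ : ℝ} {n : ℕ}

variable (κ n) in
theorem greenProfile_add_one_add_greenProfile_sub_one (t : ℝ) :
    greenProfile κ n (t + 1) + greenProfile κ n (t - 1) =
      (exp κ + exp (-κ)) * greenProfile κ n t := by
  simp only [greenProfile]
  rw [show -κ * (t + 1) = -κ * t + -κ by ring, show κ * (t + 1 - n) = κ * (t - n) + κ by ring,
    show -κ * (t - 1) = -κ * t + κ by ring, show κ * (t - 1 - n) = κ * (t - n) + -κ by ring]
  simp only [exp_add]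
  ring

variable (κ n) in
theorem greenProfile_natCast : greenProfile κ n n = greenProfile κ n 0 := by
  simp only [greenProfile, sub_self, mul_zero, zero_sub, mul_neg, neg_mul, add_comm]

theorem greenProfile_natCast_sub_one (hκ : κ ≠ 0) (hn : n ≠ 0) :
    greenProfile κ n (n - 1) = greenProfile κ n (-1) - (exp κ - exp (-κ)) := by
  have hD : 1 - exp (-κ * n) ≠ 0 := by
    rw [sub_ne_zero, ne_comm, Ne, exp_eq_one_iff]
    simp [hκ, hn]
  simp only [greenProfile]
  rw [show -κ * (n - 1) = -κ * n + κ by ring, show κ * (n - 1 - n) = -κ by ring,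
    show -κ * -1 = κ by ring, show κ * (-1 - n) = -κ * n + -κ by ring]
  simp only [exp_add]
  generalize exp (-κ * n) = E at hD ⊢
  field_simp
  ring

theorem greenProfile_emod_add_one {j : ℤ} (hj0 : 0 ≤ j) (hjn : j < n) :
    greenProfile κ n ((j + 1) % n : ℤ) = greenProfile κ n (j + 1) := by
  rcases (Int.add_one_le_iff.mpr hjn).lt_or_eq with hlt | heq
  · rw [Int.emod_eq_of_lt (by omega) hlt]
    push_cast
    rfl
  · rw [heq, Int.emod_self, Int.cast_zero, ← greenProfile_natCast]
    congr
    exact_mod_cast heq.symm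

theorem greenProfile_emod_sub_one (hκ : κ ≠ 0) {j : ℤ} (hj0 : 0 ≤ j) (hjn : j < n) :
    greenProfile κ n ((j - 1) % n : ℤ) =
      greenProfile κ n (j - 1) - if j = 0 then exp κ - exp (-κ) else 0 := by
  by_cases hj : j = 0
  · have hmod : (j - 1) % n = n - 1 := by
      rw [hj, show (0 : ℤ) - 1 = n - 1 + n * (-1) by ring, Int.add_mul_emod_self_left]
      exact Int.emod_eq_of_lt (by omega) (by omega)
    rw [hmod, if_pos hj, hj, Int.cast_zero, zero_sub]
    push_cast
    exact greenProfile_natCast_sub_one hκ (by omega : n ≠ 0)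
  · rw [Int.emod_eq_of_lt (a := j - 1) (by omega) (by omega), if_neg hj, sub_zero]
    push_cast
    rfl

end greenProfile

theorem exp_sub_exp_neg_eq_mul_sqrt {κ Δx : ℝ} (hκ : 0 < κ) (hΔx : 0 < Δx)
    (hchar : exp κ + exp (-κ) = 2 + Δx ^ 2) :
    exp κ - exp (-κ) = Δx * √(4 + Δx ^ 2) := by
  have hpos : 0 ≤ exp κ - exp (-κ) := by
    simp only [sub_nonneg, exp_le_exp]
    linarith
  refine (pow_left_inj₀ hpos (by positivity) two_ne_zero).mp ?_
  have hprod : exp κ * exp (-κ) = 1 := by rw [← exp_add, add_neg_cancel, exp_zero]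
  rw [mul_pow, sq_sqrt (by positivity)]
  linear_combination (exp κ + exp (-κ) + 2 + Δx ^ 2) * hchar - 4 * hprod

theorem periodic_greens_function_general (Δx κ : ℝ) (hΔx : 0 < Δx) (hκ : 0 < κ)
    (hchar : Real.exp κ + Real.exp (-κ) = 2 + Δx ^ 2) (n : ℕ) :
    let g : ℤ → ℝ := fun j =>
      (1 / Real.sqrt (4 + Δx ^ 2)) *
        ((Real.exp (-κ * ((j % (n : ℤ) : ℤ) : ℝ)) +
          Real.exp (κ * (((j % (n : ℤ) : ℤ) : ℝ) - n))) / (1 - Real.exp (-κ * n)))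
    ∀ j : ℤ, 0 ≤ j → j < n →
      g j - (g (j + 1) - 2 * g j + g (j - 1)) / Δx ^ 2 =
        (if j = 0 then (1 : ℝ) else 0) / Δx := by
  intro g j hj0 hjn
  have hg (m : ℤ) : g m = greenProfile κ n (m % n : ℤ) / √(4 + Δx ^ 2) := by
    simp only [g, greenProfile]
    ring
  have hrec := greenProfile_add_one_add_greenProfile_sub_one κ n j
  rw [hchar] at hrec
  rw [hg, hg, hg, greenProfile_emod_add_one hj0 hjn, greenProfile_emod_sub_one hκ.ne' hj0 hjn,
    Int.emod_eq_of_lt hj0 hjn, exp_sub_exp_neg_eq_mul_sqrt hκ hΔx hchar]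
  have hs : √(4 + Δx ^ 2) ≠ 0 := by positivity
  field_simp
  split_ifs <;> linear_combination -hrec

theorem periodic_greens_function (Δx κ : ℝ) (hΔx : 0 < Δx) (hκ : 0 < κ)
    (hchar : Real.exp κ + Real.exp (-κ) = 2 + Δx ^ 2) (n : ℕ) (hn : 1 ≤ n) :
    let g : ℤ → ℝ := fun j =>
      (1 / Real.sqrt (4 + Δx ^ 2)) *
        ((Real.exp (-κ * ((j % (n : ℤ) : ℤ) : ℝ)) +
          Real.exp (κ * (((j % (n : ℤ) : ℤ) : ℝ) - n))) / (1 - Real.exp (-κ * n)))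
    ∀ j : ℤ, 0 ≤ j → j < n →
      g j - (g (j + 1) - 2 * g j + g (j - 1)) / Δx ^ 2 =
        (if j = 0 then (1 : ℝ) else 0) / Δx :=
  periodic_greens_function_general Δx κ hΔx hκ hchar n
end

section
/- Let a, b ∈ ℝ with a > 0 and define u(x) = A e^x + B e^{-x} on an interval [y₁, y₂] with y₁ < y₂. Set ȳ = (y₁+y₂)/2, δy = (y₂-y₁)/2, ū = (u(y₂)+u(y₁))/2, δu = (u(y₂)-u(y₁))/2. Then (1/2)∫_{y₁}^{y₂} (u² + u_x²) dx = ū²·tanh(δy) + (δu)²·coth(δy). -/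
/-! Since `(u u')' = u'² + u u'' = u² + u'²`, the integral is `(u u')(y₂) - (u u')(y₁)`. Writing
`u(ȳ + t) = P cosh t + Q sinh t` with `P = u(ȳ)`, `Q = u'(ȳ)` gives `ū = P cosh δy` and
`δu = Q sinh δy`, and the boundary term becomes `P² cosh δy sinh δy + Q² sinh δy cosh δy`. -/

open Real Set intervalIntegral

theorem integral_sq_add_sq_eq_of_hasDerivAt {u u' : ℝ → ℝ} {a b : ℝ}
    (hu : ∀ x ∈ uIcc a b, HasDerivAt u (u' x) x) (hu' : ∀ x ∈ uIcc a b, HasDerivAt u' (u x) x) :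
    ∫ x in a..b, (u x ^ 2 + u' x ^ 2) = u b * u' b - u a * u' a := by
  have hprod : ∀ x ∈ uIcc a b, HasDerivAt (fun x => u x * u' x) (u x ^ 2 + u' x ^ 2) x :=
    fun x hx => ((hu x hx).fun_mul (hu' x hx)).congr_deriv (by ring)
  have hu_cont : ContinuousOn u (uIcc a b) := fun x hx => (hu x hx).continuousAt.continuousWithinAt
  have hu'_cont : ContinuousOn u' (uIcc a b) :=
    fun x hx => (hu' x hx).continuousAt.continuousWithinAt
  exact integral_eq_sub_of_hasDerivAt hprod ((hu_cont.pow 2).add (hu'_cont.pow 2)).intervalIntegrable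

theorem hasDerivAt_mul_exp_add_mul_exp_neg (A B x : ℝ) :
    HasDerivAt (fun x => A * exp x + B * exp (-x)) (A * exp x - B * exp (-x)) x :=
  (((hasDerivAt_exp x).const_mul A).fun_add
    (((hasDerivAt_neg x).exp).const_mul B)).congr_deriv (by ring)

theorem hasDerivAt_mul_exp_sub_mul_exp_neg (A B x : ℝ) :
    HasDerivAt (fun x => A * exp x - B * exp (-x)) (A * exp x + B * exp (-x)) x :=
  (((hasDerivAt_exp x).const_mul A).fun_sub
    (((hasDerivAt_neg x).exp).const_mul B)).congr_deriv (by ring)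

theorem mul_exp_add_mul_exp_neg_eq (A B m x : ℝ) :
    A * exp x + B * exp (-x) =
      (A * exp m + B * exp (-m)) * cosh (x - m) + (A * exp m - B * exp (-m)) * sinh (x - m) := by
  rw [cosh_eq, sinh_eq, neg_sub, exp_sub, exp_sub, exp_neg, exp_neg]
  field_simp
  ring

theorem energy_between_peaks (A B y₁ y₂ : ℝ) (h : y₁ < y₂) :
    let u : ℝ → ℝ := fun x => A * Real.exp x + B * Real.exp (-x)
    let ux : ℝ → ℝ := fun x => A * Real.exp x - B * Real.exp (-x)
    let ubar := (u y₂ + u y₁) / 2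
    let δu := (u y₂ - u y₁) / 2
    let δy := (y₂ - y₁) / 2
    (1 / 2) * ∫ x in y₁..y₂, ((u x) ^ 2 + (ux x) ^ 2) =
      ubar ^ 2 * Real.tanh δy + δu ^ 2 * (Real.cosh δy / Real.sinh δy) := by
  intro u ux ubar δu δy
  have energy : ∫ x in y₁..y₂, (u x ^ 2 + ux x ^ 2) = u y₂ * ux y₂ - u y₁ * ux y₁ :=
    integral_sq_add_sq_eq_of_hasDerivAt (fun x _ => hasDerivAt_mul_exp_add_mul_exp_neg A B x)
      (fun x _ => hasDerivAt_mul_exp_sub_mul_exp_neg A B x)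
  set m := (y₁ + y₂) / 2
  have hux : ∀ x, ux x = A * exp x + (-B) * exp (-x) := fun x => by simp only [ux]; ring
  have h₂ : y₂ - m = δy := by simp only [m, δy]; ring
  have h₁ : y₁ - m = -δy := by simp only [m, δy]; ring
  have hsinh : sinh δy ≠ 0 := sinh_ne_zero.mpr (by simp only [δy]; linarith)
  have hcosh : cosh δy ≠ 0 := (cosh_pos δy).ne'
  rw [energy]
  simp only [ubar, δu, hux, u]
  rw [mul_exp_add_mul_exp_neg_eq A B m y₂, mul_exp_add_mul_exp_neg_eq A B m y₁,
    mul_exp_add_mul_exp_neg_eq A (-B) m y₂, mul_exp_add_mul_exp_neg_eq A (-B) m y₁, h₁, h₂,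
    cosh_neg, sinh_neg, tanh_eq_sinh_div_cosh]
  field_simp
  ring
end

section
/- Let Π be a real 2×2 matrix with det Π = 1 that is entrywise ≥ A entrywise, where A = [[1 + Δξ², Δξ], [Δξ, 1]] with Δξ > 0, and Π has all entries positive. Then the eigenvalues of Π are real and distinct, with largest eigenvalue ϖ⁺ > 1 and smallest eigenvalue ϖ⁻ = 1/ϖ⁺ < 1. -/
/-!
The characteristic polynomial of `Π` is `X² - (tr Π) X + 1`, and the diagonal bound `Π ≥ A` gives
`tr Π ≥ tr A = 2 + Δξ² > 2`. A monic quadratic with constant term `1` and linear coefficient `-t`,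
`t > 2`, has the real root `ϖ⁺ = (t + √(t² - 4)) / 2 > 1`, and its other root is `1 / ϖ⁺ < 1`.
-/

open Polynomial

lemma exists_one_lt_sq_sub_mul_add_one_eq_zero {t : ℝ} (ht : 2 < t) :
    ∃ w : ℝ, 1 < w ∧ w ^ 2 - t * w + 1 = 0 := by
  have hdisc : 0 < t ^ 2 - 4 := by nlinarith
  have hs := Real.sq_sqrt hdisc.le
  have hs_pos := Real.sqrt_pos.mpr hdisc
  exact ⟨(t + √(t ^ 2 - 4)) / 2, by linarith, by nlinarith⟩

lemma one_div_sq_sub_mul_add_one_eq_zero {t w : ℝ} (hw : w ^ 2 - t * w + 1 = 0) :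
    (1 / w) ^ 2 - t * (1 / w) + 1 = 0 := by
  have hw0 : w ≠ 0 := by rintro rfl; norm_num at hw
  field_simp
  linear_combination hw

namespace Matrix

lemma isRoot_charpoly_fin_two_iff_of_det_eq_one {R : Type*} [CommRing R] [Nontrivial R]
    {M : Matrix (Fin 2) (Fin 2) R} (hdet : M.det = 1) (x : R) :
    M.charpoly.IsRoot x ↔ x ^ 2 - M.trace * x + 1 = 0 := by
  simp [charpoly_fin_two, hdet]

lemma trace_fin_two_le_of_le {R : Type*} [AddCommMonoid R] [PartialOrder R]
    [IsOrderedAddMonoid R] {A M : Matrix (Fin 2) (Fin 2) R} (h : ∀ i j, A i j ≤ M i j) :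
    A.trace ≤ M.trace := by
  simpa only [trace_fin_two] using add_le_add (h 0 0) (h 1 1)

end Matrix

theorem monodromy_eigenvalues_distinct_general (Δξ : ℝ) (hΔξ : 0 < Δξ)
    (P : Matrix (Fin 2) (Fin 2) ℝ) (hdet : P.det = 1)
    (hge : ∀ i j, (!![1 + Δξ ^ 2, Δξ; Δξ, 1] : Matrix (Fin 2) (Fin 2) ℝ) i j ≤ P i j) :
    ∃ wp wm : ℝ, wp ≠ wm ∧ 1 < wp ∧ wm = 1 / wp ∧ wm < 1 ∧
      P.charpoly.IsRoot wp ∧ P.charpoly.IsRoot wm := by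
  have htr : 2 < P.trace := by
    have := Matrix.trace_fin_two_le_of_le hge
    rw [Matrix.trace_fin_two_of] at this
    nlinarith
  obtain ⟨w, hw1, hw⟩ := exists_one_lt_sq_sub_mul_add_one_eq_zero htr
  have hinv : 1 / w < 1 := (div_lt_one (by linarith)).mpr hw1
  simp only [Matrix.isRoot_charpoly_fin_two_iff_of_det_eq_one hdet]
  exact ⟨w, 1 / w, by linarith, hw1, rfl, hinv, hw, one_div_sq_sub_mul_add_one_eq_zero hw⟩

theorem monodromy_eigenvalues_distinct (Δξ : ℝ) (hΔξ : 0 < Δξ)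
    (P : Matrix (Fin 2) (Fin 2) ℝ) (hdet : P.det = 1)
    (hge : ∀ i j, (!![1 + Δξ ^ 2, Δξ; Δξ, 1] : Matrix (Fin 2) (Fin 2) ℝ) i j ≤ P i j)
    (hpos : ∀ i j, 0 < P i j) :
    ∃ wp wm : ℝ, wp ≠ wm ∧ 1 < wp ∧ wm = 1 / wp ∧ wm < 1 ∧
      P.charpoly.IsRoot wp ∧ P.charpoly.IsRoot wm :=
  monodromy_eigenvalues_distinct_general Δξ hΔξ P hdet hge
end

section
/- Suppose φ : ℝ → ℝ is three times continuously differentiable, φ(z) ≠ c for all z, and φ satisfies -cφ' + cφ''' + 3φφ' - 2φ'φ'' - φφ''' = 0. Then the function z ↦ (c - φ(z))²·(φ''(z) - φ(z)) is constant. -/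
theorem hasDerivAt_sq_const_sub_mul_deriv_deriv_sub (c : ℝ) {φ : ℝ → ℝ} (hφ : ContDiff ℝ 3 φ)
    (z : ℝ) :
    HasDerivAt (fun z => (c - φ z) ^ 2 * (deriv (deriv φ) z - φ z))
      ((c - φ z) * (-c * deriv φ z + c * deriv (deriv (deriv φ)) z + 3 * φ z * deriv φ z -
        2 * deriv φ z * deriv (deriv φ) z - φ z * deriv (deriv (deriv φ)) z)) z := by
  have hφ₁ : ContDiff ℝ 2 (deriv φ) := hφ.deriv'
  have hφ₂ : ContDiff ℝ 1 (deriv (deriv φ)) := hφ₁.deriv'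
  have h₀ := (hφ.differentiable (by norm_num) z).hasDerivAt
  have h₂ := (hφ₂.differentiable one_ne_zero z).hasDerivAt
  refine ((((hasDerivAt_const z c).fun_sub h₀).fun_pow 2).fun_mul (h₂.fun_sub h₀)).congr_deriv ?_
  push_cast
  ring

theorem traveling_wave_first_integral_general (c : ℝ) (φ : ℝ → ℝ) (hφ : ContDiff ℝ 3 φ)
    (hODE : ∀ z, -c * deriv φ z + c * deriv (deriv (deriv φ)) z + 3 * φ z * deriv φ z -
        2 * deriv φ z * deriv (deriv φ) z - φ z * deriv (deriv (deriv φ)) z = 0) :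
    ∃ k : ℝ, ∀ z, (c - φ z) ^ 2 * (deriv (deriv φ) z - φ z) = k := by
  have hderiv := hasDerivAt_sq_const_sub_mul_deriv_deriv_sub c hφ
  refine ⟨(c - φ 0) ^ 2 * (deriv (deriv φ) 0 - φ 0), fun z => ?_⟩
  refine is_const_of_deriv_eq_zero (fun z => (hderiv z).differentiableAt) (fun z => ?_) z 0
  rw [(hderiv z).deriv, hODE z, mul_zero]

theorem traveling_wave_first_integral (c : ℝ) (φ : ℝ → ℝ) (hφ : ContDiff ℝ 3 φ)
    (hne : ∀ z, φ z ≠ c)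
    (hODE : ∀ z, -c * deriv φ z + c * deriv (deriv (deriv φ)) z + 3 * φ z * deriv φ z -
        2 * deriv φ z * deriv (deriv φ) z - φ z * deriv (deriv (deriv φ)) z = 0) :
    ∃ k : ℝ, ∀ z, (c - φ z) ^ 2 * (deriv (deriv φ) z - φ z) = k :=
  traveling_wave_first_integral_general c φ hφ hODE
end
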